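/- Under the same twirling hypothesis, the Haar average of the Hilbert–Schmidt overlap satisfies ∫ tr[V (U†⊗U†)(ρ⊗ρ)(U⊗U)(D†⊗D)] dU = (d − tr ρ²)/(d²−1) + |tr D|² (d tr ρ² − 1)/(d(d²−1)). -/

import Mathlib

/-!
With `P = U†ρU` the integrand is `tr (P D† P D)`. Splitting `D` into the Hermitian matrices
`C = D + D†` and `E = i (D - D†)` gives `4 tr (P D† P D) = tr (P C P C) + tr (P E P E)`, and
`tr (P X P X) = tr (V (ρ ⊗ ρ) (U ⊗ U) (X ⊗ X) (U ⊗ U)†)` is linear in the twirled operator, so the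
twirling identity evaluates its average. The answer depends on `X` only through `(tr X)²` and
`tr X²`; summed over `X = C, E` these give `4 |tr D|²` and `4 tr (D† D) = 4 d`.
-/

open Matrix MeasureTheory
open scoped Kronecker ComplexOrder

attribute [local instance] Matrix.linftyOpNormedAddCommGroup Matrix.linftyOpNormedSpace

/-- The swap operator `V(x ⊗ y) = y ⊗ x` on `ℂ^d ⊗ ℂ^d`. -/
def swapMatrix (d : ℕ) : Matrix (Fin d × Fin d) (Fin d × Fin d) ℂ :=
  fun p q => if p.1 = q.2 ∧ p.2 = q.1 then 1 else 0

theorem Matrix.div_two_eq_inv_two_smul {n K : Type*} [Fintype n] [DecidableEq n] [Field K]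
    [NeZero (2 : K)] (M : Matrix n n K) : M / 2 = (2 : K)⁻¹ • M := by
  rw [div_eq_mul_inv, inv_eq_right_inv (B := (2 : K)⁻¹ • 1), Matrix.mul_smul, mul_one]
  rw [Matrix.mul_smul, mul_one, ← Nat.cast_ofNat (R := Matrix n n K), ← Matrix.diagonal_natCast']
  ext i j
  by_cases h : i = j <;> simp [h, one_apply, inv_mul_cancel₀ (two_ne_zero (α := K))]

theorem polarization_mul_mul {R : Type*} [Ring R] [Algebra ℂ R] (A B M : R) :
    (A + B) * M * (A + B) + (Complex.I • (A - B)) * M * (Complex.I • (A - B))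
      = 2 • (A * M * B + B * M * A) := by
  simp only [smul_mul_assoc, mul_smul_comm, smul_smul, Complex.I_mul_I, neg_one_smul]
  noncomm_ring

section Polarization

variable {n : Type*}

theorem Matrix.isHermitian_I_smul_sub_conjTranspose (A : Matrix n n ℂ) :
    (Complex.I • (A - Aᴴ)).IsHermitian := by
  rw [IsHermitian, conjTranspose_smul, conjTranspose_sub, conjTranspose_conjTranspose,
    Complex.star_def, Complex.conj_I, neg_smul, ← smul_neg, neg_sub]

theorem Matrix.trace_polarization_sandwich [Fintype n] [DecidableEq n] (P A : Matrix n n ℂ) :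
    (P * (A + Aᴴ) * P * (A + Aᴴ)).trace
      + (P * (Complex.I • (A - Aᴴ)) * P * (Complex.I • (A - Aᴴ))).trace
      = 4 * (P * Aᴴ * P * A).trace := by
  have hcomm : (P * (A * P * Aᴴ)).trace = (P * (Aᴴ * P * A)).trace := by
    simpa only [Matrix.mul_assoc] using trace_mul_comm (P * A) (P * Aᴴ)
  calc _ = (P * ((A + Aᴴ) * P * (A + Aᴴ)
              + (Complex.I • (A - Aᴴ)) * P * (Complex.I • (A - Aᴴ)))).trace := by
        rw [Matrix.mul_add P (_ * _ * _), trace_add]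
        simp only [Matrix.mul_assoc]
    _ = 4 * (P * Aᴴ * P * A).trace := by
        rw [polarization_mul_mul, Matrix.mul_smul, trace_smul, Matrix.mul_add, trace_add, hcomm,
          nsmul_eq_mul]
        simp only [Matrix.mul_assoc]
        ring

theorem Matrix.trace_mul_self_polarization [Fintype n] [DecidableEq n] (A : Matrix n n ℂ) :
    ((A + Aᴴ) * (A + Aᴴ)).trace + ((Complex.I • (A - Aᴴ)) * (Complex.I • (A - Aᴴ))).trace
      = 4 * (Aᴴ * A).trace := by
  simpa using trace_polarization_sandwich 1 A

theorem Matrix.trace_sq_polarization [Fintype n] (A : Matrix n n ℂ) :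
    (A + Aᴴ).trace ^ 2 + (Complex.I • (A - Aᴴ)).trace ^ 2 = 4 * (‖A.trace‖ : ℂ) ^ 2 := by
  rw [trace_add, trace_smul, trace_sub, trace_conjTranspose, smul_eq_mul, ← Complex.mul_conj',
    Complex.star_def]
  linear_combination (A.trace - (starRingEnd ℂ) A.trace) ^ 2 * Complex.I_sq

end Polarization

section Swap

variable {d : ℕ}

theorem swapMatrix_mul_apply (M : Matrix (Fin d × Fin d) (Fin d × Fin d) ℂ) (p q : Fin d × Fin d) :
    (swapMatrix d * M) p q = M p.swap q := by
  rw [mul_apply, Finset.sum_eq_single p.swap]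
  · simp [swapMatrix]
  · rintro r - hr
    rw [swapMatrix, if_neg (fun h => hr (Prod.ext h.2.symm h.1.symm)), zero_mul]
  · simp

theorem swapMatrix_mul_swapMatrix : swapMatrix d * swapMatrix d = 1 := by
  ext p q
  rw [swapMatrix_mul_apply]
  simp [swapMatrix, one_apply, Prod.ext_iff, and_comm]

theorem trace_swapMatrix_mul_kronecker (A B : Matrix (Fin d) (Fin d) ℂ) :
    (swapMatrix d * (A ⊗ₖ B)).trace = (A * B).trace := by
  have hswap : (swapMatrix d * (A ⊗ₖ B)).trace = ∑ i, ∑ j, A j i * B i j := by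
    simp only [trace, diag, swapMatrix_mul_apply, kroneckerMap_apply, Fintype.sum_prod_type,
      Prod.fst_swap, Prod.snd_swap]
  rw [hswap, Finset.sum_comm]
  simp only [trace, diag, mul_apply]

theorem trace_one_add_swapMatrix_div_two_mul_kronecker (A B : Matrix (Fin d) (Fin d) ℂ) :
    ((1 + swapMatrix d) / 2 * (A ⊗ₖ B)).trace = (A.trace * B.trace + (A * B).trace) / 2 := by
  rw [div_two_eq_inv_two_smul, smul_mul, trace_smul, add_mul, one_mul, trace_add,
    trace_kronecker, trace_swapMatrix_mul_kronecker, smul_eq_mul, inv_mul_eq_div]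

theorem trace_one_sub_swapMatrix_div_two_mul_kronecker (A B : Matrix (Fin d) (Fin d) ℂ) :
    ((1 - swapMatrix d) / 2 * (A ⊗ₖ B)).trace = (A.trace * B.trace - (A * B).trace) / 2 := by
  rw [div_two_eq_inv_two_smul, smul_mul, trace_smul, sub_mul, one_mul, trace_sub,
    trace_kronecker, trace_swapMatrix_mul_kronecker, smul_eq_mul, inv_mul_eq_div]

end Swap

section Twirl

variable {d : ℕ}

theorem one_add_swapMatrix_div_two_mul_swapMatrix :
    (1 + swapMatrix d) / 2 * swapMatrix d = (1 + swapMatrix d) / 2 := by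
  rw [div_two_eq_inv_two_smul, smul_mul, add_mul, one_mul, swapMatrix_mul_swapMatrix, add_comm]

theorem one_sub_swapMatrix_div_two_mul_swapMatrix :
    (1 - swapMatrix d) / 2 * swapMatrix d = -((1 - swapMatrix d) / 2) := by
  rw [div_two_eq_inv_two_smul, smul_mul, sub_mul, one_mul, swapMatrix_mul_swapMatrix, ← smul_neg,
    neg_sub]

/-- The right-hand side of the two-copy twirling identity: `X ⊗ X` is projected onto the symmetric
and the antisymmetric subspace, of dimensions `d (d + 1) / 2` and `d (d - 1) / 2`. -/
noncomputable def twoCopyTwirl (d : ℕ) (X : Matrix (Fin d) (Fin d) ℂ) :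
    Matrix (Fin d × Fin d) (Fin d × Fin d) ℂ :=
  (2 / (d * (d + 1)) : ℂ) •
      ((((1 + swapMatrix d) / 2) * (X ⊗ₖ X)).trace • ((1 + swapMatrix d) / 2))
    + (2 / (d * (d - 1)) : ℂ) •
      ((((1 - swapMatrix d) / 2) * (X ⊗ₖ X)).trace • ((1 - swapMatrix d) / 2))

theorem trace_swapMatrix_mul_kronecker_mul_twoCopyTwirl (ρ X : Matrix (Fin d) (Fin d) ℂ) :
    (swapMatrix d * (ρ ⊗ₖ ρ) * twoCopyTwirl d X).trace
      = 2 / (d * (d + 1)) * ((X.trace ^ 2 + (X * X).trace) / 2)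
          * ((ρ.trace ^ 2 + (ρ * ρ).trace) / 2)
        - 2 / (d * (d - 1)) * ((X.trace ^ 2 - (X * X).trace) / 2)
          * ((ρ.trace ^ 2 - (ρ * ρ).trace) / 2) := by
  have hsym : (swapMatrix d * (ρ ⊗ₖ ρ) * ((1 + swapMatrix d) / 2)).trace
      = (ρ.trace ^ 2 + (ρ * ρ).trace) / 2 := by
    rw [trace_mul_comm, ← Matrix.mul_assoc, one_add_swapMatrix_div_two_mul_swapMatrix,
      trace_one_add_swapMatrix_div_two_mul_kronecker, sq]
  have hanti : (swapMatrix d * (ρ ⊗ₖ ρ) * ((1 - swapMatrix d) / 2)).trace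
      = -((ρ.trace ^ 2 - (ρ * ρ).trace) / 2) := by
    rw [trace_mul_comm, ← Matrix.mul_assoc, one_sub_swapMatrix_div_two_mul_swapMatrix, neg_mul,
      trace_neg, trace_one_sub_swapMatrix_div_two_mul_kronecker, sq]
  rw [twoCopyTwirl, Matrix.mul_add, trace_add, Matrix.mul_smul, Matrix.mul_smul, Matrix.mul_smul,
    Matrix.mul_smul, trace_smul, trace_smul, trace_smul, trace_smul, hsym, hanti,
    trace_one_add_swapMatrix_div_two_mul_kronecker,
    trace_one_sub_swapMatrix_div_two_mul_kronecker]
  simp only [smul_eq_mul]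
  ring

theorem trace_swapMatrix_mul_twoCopyTwirl (hd : 1 < d) (X : Matrix (Fin d) (Fin d) ℂ) :
    (swapMatrix d * twoCopyTwirl d X).trace = (X * X).trace := by
  have hd0 : (d : ℂ) ≠ 0 := Nat.cast_ne_zero.mpr (by omega)
  have hd1 : (d : ℂ) + 1 ≠ 0 := by exact_mod_cast Nat.succ_ne_zero d
  have hd1' : (d : ℂ) - 1 ≠ 0 := sub_ne_zero.mpr (by exact_mod_cast hd.ne')
  have h := trace_swapMatrix_mul_kronecker_mul_twoCopyTwirl (1 : Matrix (Fin d) (Fin d) ℂ) X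
  rw [one_kronecker_one, Matrix.mul_one] at h
  rw [h, Matrix.mul_one, trace_one, Fintype.card_fin]
  field_simp
  ring

end Twirl

section Conj

variable {d : ℕ}

def twoCopyConj (U X : Matrix (Fin d) (Fin d) ℂ) : Matrix (Fin d × Fin d) (Fin d × Fin d) ℂ :=
  (U ⊗ₖ U) * (X ⊗ₖ X) * (Uᴴ ⊗ₖ Uᴴ)

/-- A non-integrable family has Bochner integral `0`, while `twoCopyTwirl d X` detects
`tr (X X) = tr (Xᴴ X)`, which vanishes only at `X = 0`. The topology is spelled out because
instance search finds the product topology on `Matrix`, not the one of the norm used by `∫`. -/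
theorem integrable_twoCopyConj_of_integral_eq_twoCopyTwirl (hd : 1 < d) {Ω : Type*}
    [MeasurableSpace Ω] {μ : Measure Ω} (u : Ω → Matrix (Fin d) (Fin d) ℂ)
    {X : Matrix (Fin d) (Fin d) ℂ} (hX : X.IsHermitian)
    (h : ∫ ω, twoCopyConj (u ω) X ∂μ = twoCopyTwirl d X) :
    @Integrable _ NormedAddCommGroup.toMetricSpace.toUniformSpace.toTopologicalSpace _ _ _
      (fun ω => twoCopyConj (u ω) X) μ := by
  by_contra hint
  rw [integral_undef hint] at h
  have hX0 : (Xᴴ * X).trace = 0 := by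
    rw [hX.eq, ← trace_swapMatrix_mul_twoCopyTwirl hd, ← h, Matrix.mul_zero, trace_zero]
  rw [trace_conjTranspose_mul_self_eq_zero_iff] at hX0
  subst hX0
  simp [twoCopyConj] at hint

theorem trace_swapMatrix_mul_kronecker_mul_twoCopyConj (ρ U X : Matrix (Fin d) (Fin d) ℂ) :
    (swapMatrix d * (ρ ⊗ₖ ρ) * twoCopyConj U X).trace
      = (Uᴴ * ρ * U * X * (Uᴴ * ρ * U) * X).trace := by
  rw [twoCopyConj, ← mul_kronecker_mul, ← mul_kronecker_mul, Matrix.mul_assoc,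
    ← mul_kronecker_mul, trace_swapMatrix_mul_kronecker]
  have hcycle : ρ * (U * X * Uᴴ) * (ρ * (U * X * Uᴴ)) = ρ * U * X * Uᴴ * ρ * U * X * Uᴴ := by
    simp only [Matrix.mul_assoc]
  rw [hcycle, trace_mul_comm]
  simp only [Matrix.mul_assoc]

theorem trace_swapMatrix_mul_overlap_polarization (ρ U D : Matrix (Fin d) (Fin d) ℂ) :
    (swapMatrix d * ((Uᴴ ⊗ₖ Uᴴ) * (ρ ⊗ₖ ρ) * (U ⊗ₖ U) * (Dᴴ ⊗ₖ D))).trace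
      = 4⁻¹ * ((swapMatrix d * (ρ ⊗ₖ ρ) * twoCopyConj U (D + Dᴴ)).trace
          + (swapMatrix d * (ρ ⊗ₖ ρ) * twoCopyConj U (Complex.I • (D - Dᴴ))).trace) := by
  rw [trace_swapMatrix_mul_kronecker_mul_twoCopyConj,
    trace_swapMatrix_mul_kronecker_mul_twoCopyConj, trace_polarization_sandwich,
    ← mul_kronecker_mul, ← mul_kronecker_mul, ← mul_kronecker_mul, trace_swapMatrix_mul_kronecker]
  simp only [Matrix.mul_assoc]
  ring

end Conj

section Integral

variable {d : ℕ} {Ω : Type*} [MeasurableSpace Ω] {μ : Measure Ω}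

theorem integrable_trace_mul_twoCopyConj (hd : 1 < d) (u : Ω → Matrix (Fin d) (Fin d) ℂ)
    {X : Matrix (Fin d) (Fin d) ℂ} (hX : X.IsHermitian)
    (h : ∫ ω, twoCopyConj (u ω) X ∂μ = twoCopyTwirl d X)
    (K : Matrix (Fin d × Fin d) (Fin d × Fin d) ℂ) :
    Integrable (fun ω => (K * twoCopyConj (u ω) X).trace) μ :=
  (traceLinearMap _ ℂ ℂ ∘ₗ LinearMap.mulLeft ℂ K).toContinuousLinearMap.integrable_comp
    (integrable_twoCopyConj_of_integral_eq_twoCopyTwirl hd u hX h)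

theorem integral_trace_mul_twoCopyConj (hd : 1 < d) (u : Ω → Matrix (Fin d) (Fin d) ℂ)
    {X : Matrix (Fin d) (Fin d) ℂ} (hX : X.IsHermitian)
    (h : ∫ ω, twoCopyConj (u ω) X ∂μ = twoCopyTwirl d X)
    (K : Matrix (Fin d × Fin d) (Fin d × Fin d) ℂ) :
    ∫ ω, (K * twoCopyConj (u ω) X).trace ∂μ = (K * twoCopyTwirl d X).trace := by
  rw [← h]
  exact (traceLinearMap _ ℂ ℂ ∘ₗ LinearMap.mulLeft ℂ K).toContinuousLinearMap.integral_comp_comm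
    (integrable_twoCopyConj_of_integral_eq_twoCopyTwirl hd u hX h)

end Integral

theorem haar_average_hilbert_schmidt_overlap_general {d : ℕ} (hd : 1 < d)
    [MeasurableSpace (Matrix.unitaryGroup (Fin d) ℂ)]
    (μ : Measure (Matrix.unitaryGroup (Fin d) ℂ))
    (ρ D : Matrix (Fin d) (Fin d) ℂ)
    (hρtr : ρ.trace = 1)
    (hD : D ∈ Matrix.unitaryGroup (Fin d) ℂ)
    (htwirl : ∀ X : Matrix (Fin d) (Fin d) ℂ, X.IsHermitian →
      (∫ U : Matrix.unitaryGroup (Fin d) ℂ,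
          ((U : Matrix (Fin d) (Fin d) ℂ) ⊗ₖ (U : Matrix (Fin d) (Fin d) ℂ)) * (X ⊗ₖ X) *
            (((U : Matrix (Fin d) (Fin d) ℂ)ᴴ) ⊗ₖ ((U : Matrix (Fin d) (Fin d) ℂ)ᴴ)) ∂μ)
        = (2 / (d * (d + 1)) : ℂ) •
            ((((1 + swapMatrix d) / 2) * (X ⊗ₖ X)).trace • ((1 + swapMatrix d) / 2))
          + (2 / (d * (d - 1)) : ℂ) •
            ((((1 - swapMatrix d) / 2) * (X ⊗ₖ X)).trace • ((1 - swapMatrix d) / 2))) :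
    (∫ U : Matrix.unitaryGroup (Fin d) ℂ,
        (swapMatrix d *
          ((((U : Matrix (Fin d) (Fin d) ℂ)ᴴ) ⊗ₖ ((U : Matrix (Fin d) (Fin d) ℂ)ᴴ)) * (ρ ⊗ₖ ρ) *
            (((U : Matrix (Fin d) (Fin d) ℂ)) ⊗ₖ ((U : Matrix (Fin d) (Fin d) ℂ))) *
            (Dᴴ ⊗ₖ D))).trace ∂μ)
      = ((d : ℂ) - (ρ * ρ).trace) / (d ^ 2 - 1)
        + ((‖D.trace‖ : ℂ) ^ 2) * ((d : ℂ) * (ρ * ρ).trace - 1) / (d * (d ^ 2 - 1)) := by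
  set C := D + Dᴴ
  set E := Complex.I • (D - Dᴴ)
  set K := swapMatrix d * (ρ ⊗ₖ ρ)
  have hC : C.IsHermitian := isHermitian_add_transpose_self D
  have hE : E.IsHermitian := isHermitian_I_smul_sub_conjTranspose D
  have hCtwirl := htwirl C hC
  have hEtwirl := htwirl E hE
  have htr_sq : C.trace ^ 2 + E.trace ^ 2 = 4 * (‖D.trace‖ : ℂ) ^ 2 := trace_sq_polarization D
  have htr_mul_self : (C * C).trace + (E * E).trace = 4 * d := by
    have hDD : Dᴴ * D = 1 := mem_unitaryGroup_iff'.mp hD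
    rw [trace_mul_self_polarization, hDD, trace_one, Fintype.card_fin]
  have hd0 : (d : ℂ) ≠ 0 := Nat.cast_ne_zero.mpr (by omega)
  have hd1 : (d : ℂ) + 1 ≠ 0 := by exact_mod_cast Nat.succ_ne_zero d
  have hd1' : (d : ℂ) - 1 ≠ 0 := sub_ne_zero.mpr (by exact_mod_cast hd.ne')
  have hd2 : (d : ℂ) ^ 2 - 1 ≠ 0 := by
    rw [show (d : ℂ) ^ 2 - 1 = (d - 1) * (d + 1) by ring]
    exact mul_ne_zero hd1' hd1
  calc _ = ∫ U : unitaryGroup (Fin d) ℂ,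
          4⁻¹ * ((K * twoCopyConj (U : Matrix (Fin d) (Fin d) ℂ) C).trace
            + (K * twoCopyConj (U : Matrix (Fin d) (Fin d) ℂ) E).trace) ∂μ :=
        integral_congr_ae (ae_of_all _ fun U => trace_swapMatrix_mul_overlap_polarization ρ U D)
    _ = 4⁻¹ * ((K * twoCopyTwirl d C).trace + (K * twoCopyTwirl d E).trace) := by
        rw [integral_const_mul,
          integral_add (integrable_trace_mul_twoCopyConj hd _ hC hCtwirl K)
            (integrable_trace_mul_twoCopyConj hd _ hE hEtwirl K),
          integral_trace_mul_twoCopyConj hd _ hC hCtwirl,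
          integral_trace_mul_twoCopyConj hd _ hE hEtwirl]
    _ = _ := by
        rw [trace_swapMatrix_mul_kronecker_mul_twoCopyTwirl,
          trace_swapMatrix_mul_kronecker_mul_twoCopyTwirl, hρtr, eq_sub_of_add_eq' htr_sq,
          eq_sub_of_add_eq' htr_mul_self]
        field_simp
        ring

theorem haar_average_hilbert_schmidt_overlap {d : ℕ} (hd : 1 < d)
    [MeasurableSpace (Matrix.unitaryGroup (Fin d) ℂ)]
    (μ : Measure (Matrix.unitaryGroup (Fin d) ℂ)) [IsProbabilityMeasure μ]
    (ρ D : Matrix (Fin d) (Fin d) ℂ)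
    (hρ : ρ.PosSemidef) (hρtr : ρ.trace = 1)
    (hD : D ∈ Matrix.unitaryGroup (Fin d) ℂ) (hDdiag : D.IsDiag)
    (htwirl : ∀ X : Matrix (Fin d) (Fin d) ℂ, X.IsHermitian →
      (∫ U : Matrix.unitaryGroup (Fin d) ℂ,
          ((U : Matrix (Fin d) (Fin d) ℂ) ⊗ₖ (U : Matrix (Fin d) (Fin d) ℂ)) * (X ⊗ₖ X) *
            (((U : Matrix (Fin d) (Fin d) ℂ)ᴴ) ⊗ₖ ((U : Matrix (Fin d) (Fin d) ℂ)ᴴ)) ∂μ)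
        = (2 / (d * (d + 1)) : ℂ) •
            ((((1 + swapMatrix d) / 2) * (X ⊗ₖ X)).trace • ((1 + swapMatrix d) / 2))
          + (2 / (d * (d - 1)) : ℂ) •
            ((((1 - swapMatrix d) / 2) * (X ⊗ₖ X)).trace • ((1 - swapMatrix d) / 2))) :
    (∫ U : Matrix.unitaryGroup (Fin d) ℂ,
        (swapMatrix d *
          ((((U : Matrix (Fin d) (Fin d) ℂ)ᴴ) ⊗ₖ ((U : Matrix (Fin d) (Fin d) ℂ)ᴴ)) * (ρ ⊗ₖ ρ) *
            (((U : Matrix (Fin d) (Fin d) ℂ)) ⊗ₖ ((U : Matrix (Fin d) (Fin d) ℂ))) *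
            (Dᴴ ⊗ₖ D))).trace ∂μ)
      = ((d : ℂ) - (ρ * ρ).trace) / (d ^ 2 - 1)
        + ((‖D.trace‖ : ℂ) ^ 2) * ((d : ℂ) * (ρ * ρ).trace - 1) / (d * (d ^ 2 - 1)) :=
  haar_average_hilbert_schmidt_overlap_general hd μ ρ D hρtr hD htwirl
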